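/- arXiv:2103.15540 — 5 statements merged into one kernel-verified Lean document; each statement's English description precedes it below -/
import Mathlib

section
/- Let p be a strictly positive distribution on a finite product space indexed by V, and let i, j, k ∈ V be distinct with k not in C, where C ⊆ V \ {i,j,k}. If X_i ⊥ X_k | X_{V∖{i,k}} (conditional independence given all other variables) and X_i ⊥ X_j | x_C, X_k = x_k, X_{V∖(C∪{i,j,k})} holds for some fixed x_k, then X_i ⊥ X_j | x_C, X_{V∖(C∪{i,j})}, i.e. the context-specific independence holds with X_k unfixed. -/
open Finset

variable {V : Type*} [Fintype V] [DecidableEq V] {X : V → Type*}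
  [∀ j, Fintype (X j)] [∀ j, DecidableEq (X j)]

/-- Marginal probability of the event that the coordinates in `S` agree with `x`. -/
noncomputable def marg (p : (∀ j, X j) → ℝ) (S : Finset V) (x : ∀ j, X j) : ℝ :=
  ∑ y ∈ Finset.univ.filter (fun y : ∀ j, X j => ∀ j ∈ S, y j = x j), p y

/-- Context-specific independence `X_A ⊥ X_B | x_C, X_S` in cross-multiplied form. -/
def CSI (p : (∀ j, X j) → ℝ) (A B C S : Finset V) (xC : ∀ j, X j) : Prop :=
  ∀ x : ∀ j, X j, (∀ j ∈ C, x j = xC j) →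
    marg p (A ∪ B ∪ C ∪ S) x * marg p (C ∪ S) x
      = marg p (A ∪ C ∪ S) x * marg p (B ∪ C ∪ S) x

/-- Conditional independence `X_A ⊥ X_B | X_S` in cross-multiplied form. -/
def CondIndep (p : (∀ j, X j) → ℝ) (A B S : Finset V) : Prop :=
  ∀ x : ∀ j, X j,
    marg p (A ∪ B ∪ S) x * marg p S x = marg p (A ∪ S) x * marg p (B ∪ S) x

section AuxLemmas

lemma marg_pos (p : (∀ j, X j) → ℝ) (hp : ∀ x, 0 < p x) (S : Finset V) (x : ∀ j, X j) :
    0 < marg p S x := by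
  apply Finset.sum_pos (fun y _ => hp y)
  exact ⟨x, by simp⟩

lemma marg_congr (p : (∀ j, X j) → ℝ) {S : Finset V} {x y : ∀ j, X j}
    (h : ∀ l ∈ S, x l = y l) : marg p S x = marg p S y := by
  unfold marg
  congr 1
  ext z
  simp only [Finset.mem_filter, Finset.mem_univ, true_and]
  exact ⟨fun hz l hl => (hz l hl).trans (h l hl), fun hz l hl => (hz l hl).trans (h l hl).symm⟩

lemma marg_univ (p : (∀ j, X j) → ℝ) (x : ∀ j, X j) : marg p Finset.univ x = p x := by
  unfold marg
  rw [show Finset.univ.filter (fun y : ∀ j, X j => ∀ j ∈ Finset.univ, y j = x j) = {x} from ?_]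
  · simp
  · ext y
    simp [funext_iff]

lemma marg_insert (p : (∀ j, X j) → ℝ) {S : Finset V} {l : V} (hl : l ∉ S) (x : ∀ j, X j) :
    marg p S x = ∑ v : X l, marg p (insert l S) (Function.update x l v) := by
  unfold marg
  rw [← Finset.sum_fiberwise (Finset.univ.filter (fun y : ∀ j, X j => ∀ j ∈ S, y j = x j))
    (fun y => y l) p]
  refine Finset.sum_congr rfl fun v _ => ?_
  congr 1
  ext z
  simp only [Finset.mem_filter, Finset.mem_univ, true_and, Finset.mem_insert]
  constructor
  · rintro ⟨h1, h2⟩ m hm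
    rcases hm with rfl | hm
    · simp [h2]
    · rw [Function.update_of_ne (by rintro rfl; exact hl hm)]
      exact h1 m hm
  · intro h
    refine ⟨fun m hm => ?_, ?_⟩
    · have := h m (Or.inr hm)
      rwa [Function.update_of_ne (by rintro rfl; exact hl hm)] at this
    · simpa using h l (Or.inl rfl)

lemma aux_ik_univ {a b : V} : ({a} : Finset V) ∪ {b} ∪ (Finset.univ \ {a, b}) = Finset.univ := by
  ext l; by_cases h1 : l = a <;> by_cases h2 : l = b <;> simp_all

lemma aux_ik_left {a b : V} (hab : a ≠ b) :
    ({a} : Finset V) ∪ (Finset.univ \ {a, b}) = Finset.univ \ {b} := by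
  ext l; by_cases h1 : l = a <;> by_cases h2 : l = b <;> simp_all

lemma aux_ik_right {a b : V} (hab : a ≠ b) :
    ({b} : Finset V) ∪ (Finset.univ \ {a, b}) = Finset.univ \ {a} := by
  ext l; by_cases h1 : l = a <;> by_cases h2 : l = b <;> simp_all

lemma aux_csi_univ {a b : V} {T : Finset V} :
    ({a} : Finset V) ∪ {b} ∪ T ∪ (Finset.univ \ (T ∪ {a, b})) = Finset.univ := by
  ext l; by_cases h1 : l = a <;> by_cases h2 : l = b <;> by_cases h3 : l ∈ T <;> simp_all

lemma aux_csi_base {a b : V} {T : Finset V} (ha : a ∉ T) (hb : b ∉ T) :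
    T ∪ (Finset.univ \ (T ∪ {a, b})) = Finset.univ \ ({a, b} : Finset V) := by
  ext l; by_cases h1 : l = a <;> by_cases h2 : l = b <;> by_cases h3 : l ∈ T <;> simp_all

lemma aux_csi_left {a b : V} {T : Finset V} (hab : a ≠ b) (hb : b ∉ T) :
    ({a} : Finset V) ∪ T ∪ (Finset.univ \ (T ∪ {a, b})) = Finset.univ \ ({b} : Finset V) := by
  ext l; by_cases h1 : l = a <;> by_cases h2 : l = b <;> by_cases h3 : l ∈ T <;> simp_all

lemma aux_csi_right {a b : V} {T : Finset V} (hab : a ≠ b) (ha : a ∉ T) :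
    ({b} : Finset V) ∪ T ∪ (Finset.univ \ (T ∪ {a, b})) = Finset.univ \ ({a} : Finset V) := by
  ext l; by_cases h1 : l = a <;> by_cases h2 : l = b <;> by_cases h3 : l ∈ T <;> simp_all

lemma aux_insert_compl {b : V} : insert b (Finset.univ \ ({b} : Finset V)) = Finset.univ := by
  ext l; by_cases h2 : l = b <;> simp_all

lemma aux_insert_compl2 {a b : V} (hab : a ≠ b) :
    insert b (Finset.univ \ ({a, b} : Finset V)) = Finset.univ \ ({a} : Finset V) := by
  ext l; by_cases h1 : l = a <;> by_cases h2 : l = b <;> simp_all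

end AuxLemmas

/-- Proposition 1, one direction: if `X_i ⊥ X_k | X_{V∖{i,k}}` and the
context-specific independence of `X_i` and `X_j` holds with `X_k` fixed to `x_k`
(in addition to the context `x_C`), then it holds with `X_k` unfixed. -/
theorem csi_drop_fixed_coordinate (p : (∀ j, X j) → ℝ) (hp : ∀ x, 0 < p x)
    (hps : ∑ x : ∀ j, X j, p x = 1)
    (i j k : V) (hij : i ≠ j) (hik : i ≠ k) (hjk : j ≠ k)
    (C : Finset V) (hC : C ⊆ Finset.univ \ {i, j, k})
    (xC : ∀ l, X l) (xk : X k)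
    (hCI : CondIndep p {i} {k} (Finset.univ \ {i, k}))
    (hCSI : CSI p {i} {j} (insert k C)
      (Finset.univ \ (insert k C ∪ {i, j})) (Function.update xC k xk)) :
    CSI p {i} {j} C (Finset.univ \ (C ∪ {i, j})) xC := by
  have hCne : ∀ l ∈ C, l ≠ i ∧ l ≠ j ∧ l ≠ k := by
    intro l hl
    have := hC hl
    simpa using this
  have hiC : i ∉ C := fun h => (hCne i h).1 rfl
  have hjC : j ∉ C := fun h => (hCne j h).2.1 rfl
  have hkC : k ∉ C := fun h => (hCne k h).2.2 rfl
  clear hps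
  -- abbreviations
  set A : (∀ l, X l) → ℝ := fun z => marg p (Finset.univ \ {i}) z with hA
  set B : (∀ l, X l) → ℝ := fun z => marg p (Finset.univ \ {j}) z with hB
  set D : (∀ l, X l) → ℝ := fun z => marg p (Finset.univ \ ({i, j} : Finset V)) z with hD
  -- conditional independence in clean form
  have hCI' : ∀ z, p z * marg p (Finset.univ \ ({i, k} : Finset V)) z
      = marg p (Finset.univ \ ({k} : Finset V)) z * A z := by
    intro z
    have h := hCI z
    rw [aux_ik_univ, aux_ik_left hik, aux_ik_right hik, marg_univ] at h
    exact h
  -- the ratio p/A does not depend on coordinate k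
  have hrk : ∀ z (v : X k), p (Function.update z k v) * A z = p z * A (Function.update z k v) := by
    intro z v
    have hzk : ∀ l ∈ Finset.univ \ ({i, k} : Finset V), Function.update z k v l = z l := by
      intro l hl
      simp only [Finset.mem_sdiff, Finset.mem_insert, Finset.mem_singleton] at hl
      exact Function.update_of_ne (fun h => hl.2 (Or.inr h)) _ _
    have hzk' : ∀ l ∈ Finset.univ \ ({k} : Finset V), Function.update z k v l = z l := by
      intro l hl
      simp only [Finset.mem_sdiff, Finset.mem_singleton] at hl
      exact Function.update_of_ne hl.2 _ _
    have h1 := hCI' (Function.update z k v)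
    have h2 := hCI' z
    rw [marg_congr p hzk, marg_congr p hzk'] at h1
    have hF : 0 < marg p (Finset.univ \ ({i, k} : Finset V)) z := marg_pos p hp _ _
    apply mul_right_cancel₀ hF.ne'
    calc p (Function.update z k v) * A z * marg p (Finset.univ \ ({i, k} : Finset V)) z
        = (p (Function.update z k v) * marg p (Finset.univ \ ({i, k} : Finset V)) z) * A z := by
          ring
      _ = (marg p (Finset.univ \ ({k} : Finset V)) z * A (Function.update z k v)) * A z := by
          rw [h1]
      _ = (marg p (Finset.univ \ ({k} : Finset V)) z * A z) * A (Function.update z k v) := by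
          ring
      _ = (p z * marg p (Finset.univ \ ({i, k} : Finset V)) z) * A (Function.update z k v) := by
          rw [h2]
      _ = p z * A (Function.update z k v) * marg p (Finset.univ \ ({i, k} : Finset V)) z := by
          ring
  -- the context-specific independence hypothesis in clean form
  have hiT : i ∉ insert k C := by simp [hik, hiC]
  have hjT : j ∉ insert k C := by simp [hjk, hjC]
  have hCSI' : ∀ z, (∀ l ∈ C, z l = xC l) → z k = xk → p z * D z = B z * A z := by
    intro z hzC hzk
    have hctx : ∀ l ∈ insert k C, z l = Function.update xC k xk l := by
      intro l hl
      rcases Finset.mem_insert.mp hl with h | h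
      · subst h
        simp [hzk]
      · rw [Function.update_of_ne ((hCne l h).2.2)]
        exact hzC l h
    have h := hCSI z hctx
    rw [aux_csi_univ, aux_csi_base hiT hjT, aux_csi_left hij hjT, aux_csi_right hij hiT,
      marg_univ] at h
    exact h
  -- now prove the goal
  intro x hx
  rw [aux_csi_univ, aux_csi_base hiC hjC, aux_csi_left hij hjC, aux_csi_right hij hiC, marg_univ]
  show p x * D x = B x * A x
  -- goal is now : p x * D x = A x * B x (in some order)
  set x' : ∀ l, X l := Function.update x k xk with hx'def
  have hx'C : ∀ l ∈ C, x' l = xC l := by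
    intro l hl
    rw [hx'def, Function.update_of_ne ((hCne l hl).2.2)]
    exact hx l hl
  have hx'k : x' k = xk := by simp [hx'def]
  have hDx' : 0 < D x' := marg_pos p hp _ _
  have hAx' : 0 < A x' := marg_pos p hp _ _
  -- central fact at x'
  have hcent : p x' * D x' = B x' * A x' := hCSI' x' hx'C hx'k
  -- key: ∀ v, p (update x j v) * D x' = B x' * A (update x j v)
  have hkey : ∀ v : X j, p (Function.update x j v) * D x'
      = B x' * A (Function.update x j v) := by
    intro v
    set z : ∀ l, X l := Function.update x j v with hzdef
    set z' : ∀ l, X l := Function.update x' j v with hz'def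
    have hzz' : z' = Function.update z k xk := by
      rw [hz'def, hzdef, hx'def, Function.update_comm hjk.symm]
    have hz'C : ∀ l ∈ C, z' l = xC l := by
      intro l hl
      rw [hz'def, Function.update_of_ne ((hCne l hl).2.1)]
      exact hx'C l hl
    have hz'k : z' k = xk := by
      rw [hz'def, Function.update_of_ne (Ne.symm hjk)]
      exact hx'k
    have h1 : p z' * D z' = B z' * A z' := hCSI' z' hz'C hz'k
    have hDeq : D z' = D x' := marg_congr p (by
      intro l hl
      simp only [Finset.mem_sdiff, Finset.mem_insert, Finset.mem_singleton, Finset.mem_univ,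
        true_and] at hl
      rw [hz'def]
      exact Function.update_of_ne (fun e => hl (Or.inr e)) _ _)
    have hBeq : B z' = B x' := marg_congr p (by
      intro l hl
      simp only [Finset.mem_sdiff, Finset.mem_singleton, Finset.mem_univ, true_and] at hl
      rw [hz'def]
      exact Function.update_of_ne hl _ _)
    rw [hDeq, hBeq] at h1
    -- h1 : p z' * D x' = B x' * A z'
    have h2 : p z' * A z = p z * A z' := by
      have := hrk z xk
      rw [← hzz'] at this
      exact this
    have hAz' : 0 < A z' := marg_pos p hp _ _
    apply mul_right_cancel₀ hAz'.ne'
    calc p z * D x' * A z' = (p z * A z') * D x' := by ring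
      _ = (p z' * A z) * D x' := by rw [h2]
      _ = (p z' * D x') * A z := by ring
      _ = (B x' * A z') * A z := by rw [h1]
      _ = B x' * A z * A z' := by ring
  -- decompose B x and D x over coordinate j
  have hBx : B x = ∑ v : X j, p (Function.update x j v) := by
    show marg p (Finset.univ \ ({j} : Finset V)) x = _
    rw [marg_insert p (show j ∉ Finset.univ \ ({j} : Finset V) from by simp) x]
    refine Finset.sum_congr rfl fun v _ => ?_
    rw [aux_insert_compl, marg_univ]
  have hDx : D x = ∑ v : X j, A (Function.update x j v) := by
    show marg p (Finset.univ \ ({i, j} : Finset V)) x = _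
    rw [marg_insert p (show j ∉ Finset.univ \ ({i, j} : Finset V) from by simp) x]
    refine Finset.sum_congr rfl fun v _ => ?_
    rw [aux_insert_compl2 hij]
  -- B x * D x' = B x' * D x
  have hBD : B x * D x' = B x' * D x := by
    rw [hBx, hDx, Finset.sum_mul, Finset.mul_sum]
    exact Finset.sum_congr rfl fun v _ => hkey v
  -- p x * D x' = B x' * A x
  have hpx : p x * D x' = B x' * A x := by
    have h2 : p x' * A x = p x * A x' := hrk x xk
    apply mul_right_cancel₀ hAx'.ne'
    calc p x * D x' * A x' = (p x * A x') * D x' := by ring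
      _ = (p x' * A x) * D x' := by rw [h2]
      _ = (p x' * D x') * A x := by ring
      _ = (B x' * A x') * A x := by rw [hcent]
      _ = B x' * A x * A x' := by ring
  -- conclude
  apply mul_right_cancel₀ hDx'.ne'
  calc p x * D x * D x' = (p x * D x') * D x := by ring
    _ = (B x' * A x) * D x := by rw [hpx]
    _ = (B x' * D x) * A x := by ring
    _ = (B x * D x') * A x := by rw [hBD]
    _ = B x * A x * D x' := by ring
end

section
/- Let p be a strictly positive distribution on a finite product space with log-linear expansion log p(x) = Σ_{A⊆V} φ_A(x_A) under the zero-constraint φ_A(x_A) = 0 if x_j = 0 for some j ∈ A. Let (V1, V2, V3) be a partition of V. Then X_{V1} ⊥ X_{V2} | X_{V3} holds if and only if φ_A ≡ 0 for every A ⊆ V with A ∩ V1 ≠ ∅ and A ∩ V2 ≠ ∅. -/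
open Finset

section Aux

variable {V : Type*} [Fintype V] [DecidableEq V] {X : V → Type*}
  [∀ j, Fintype (X j)] [∀ j, DecidableEq (X j)] [∀ j, Zero (X j)]

/-- Keep the coordinates in `B`, set the others to `0`. -/
def llmask (B : Finset V) (x : ∀ j, X j) : ∀ j, X j :=
  fun j => if j ∈ B then x j else 0

lemma ll_restrict (p : (∀ j, X j) → ℝ) (φ : Finset V → (∀ j, X j) → ℝ)
    (hloc : ∀ A : Finset V, ∀ x y : ∀ j, X j, (∀ j ∈ A, x j = y j) → φ A x = φ A y)
    (hzero : ∀ A : Finset V, ∀ x : ∀ j, X j, (∃ j ∈ A, x j = 0) → φ A x = 0)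
    (hexp : ∀ x : ∀ j, X j, Real.log (p x) = ∑ A : Finset V, φ A x)
    (B : Finset V) (x : ∀ j, X j) :
    Real.log (p (llmask B x)) = ∑ C ∈ B.powerset, φ C x := by
  rw [hexp]
  rw [← Finset.sum_subset (Finset.subset_univ B.powerset)]
  · exact Finset.sum_congr rfl fun C hC =>
      hloc C _ x fun j hj => if_pos (Finset.mem_powerset.1 hC hj)
  · intro C _ hC
    rw [Finset.mem_powerset] at hC
    obtain ⟨j, hjC, hjB⟩ := Finset.not_subset.1 hC
    exact hzero C _ ⟨j, hjC, if_neg hjB⟩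

lemma ll_inner_sum (A C : Finset V) (hC : C ⊆ A) :
    ∑ B ∈ A.powerset.filter (fun B => C ⊆ B), (-1:ℝ)^B.card
      = if C = A then (-1:ℝ)^A.card else 0 := by
  have hbij : ∑ B ∈ A.powerset.filter (fun B => C ⊆ B), (-1:ℝ)^B.card
      = ∑ D ∈ (A \ C).powerset, (-1:ℝ)^(C ∪ D).card := by
    apply Finset.sum_bij' (fun B _ => B \ C) (fun D _ => C ∪ D)
    · intro B hB
      simp only [Finset.mem_filter, Finset.mem_powerset] at hB
      exact Finset.mem_powerset.2 (Finset.sdiff_subset_sdiff hB.1 le_rfl)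
    · intro D hD
      rw [Finset.mem_powerset] at hD
      simp only [Finset.mem_filter, Finset.mem_powerset]
      exact ⟨Finset.union_subset hC (hD.trans (Finset.sdiff_subset)), Finset.subset_union_left⟩
    · intro B hB
      simp only [Finset.mem_filter, Finset.mem_powerset] at hB
      exact Finset.union_sdiff_of_subset hB.2
    · intro D hD
      rw [Finset.mem_powerset] at hD
      rw [Finset.union_sdiff_cancel_left (Finset.disjoint_sdiff.mono_right hD)]
    · intro B hB
      simp only [Finset.mem_filter, Finset.mem_powerset] at hB
      rw [Finset.union_sdiff_of_subset hB.2]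
  rw [hbij]
  have hcard : ∀ D ∈ (A \ C).powerset, (-1:ℝ)^(C ∪ D).card = (-1:ℝ)^C.card * (-1:ℝ)^D.card := by
    intro D hD
    rw [Finset.mem_powerset] at hD
    rw [Finset.card_union_of_disjoint (Finset.disjoint_sdiff.mono_right hD), pow_add]
  rw [Finset.sum_congr rfl hcard, ← Finset.mul_sum]
  have hz : (∑ D ∈ (A \ C).powerset, (-1:ℝ)^D.card)
      = ((∑ D ∈ (A \ C).powerset, (-1:ℤ)^D.card : ℤ) : ℝ) := by push_cast; rfl
  rw [hz, Finset.sum_powerset_neg_one_pow_card]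
  by_cases h : C = A
  · subst h; simp
  · have : ¬ A \ C = ∅ := by
      rw [Finset.sdiff_eq_empty_iff_subset]
      exact fun hAC => h (Finset.Subset.antisymm hC hAC)
    simp [this, h]

lemma ll_mobius (p : (∀ j, X j) → ℝ) (φ : Finset V → (∀ j, X j) → ℝ)
    (hloc : ∀ A : Finset V, ∀ x y : ∀ j, X j, (∀ j ∈ A, x j = y j) → φ A x = φ A y)
    (hzero : ∀ A : Finset V, ∀ x : ∀ j, X j, (∃ j ∈ A, x j = 0) → φ A x = 0)
    (hexp : ∀ x : ∀ j, X j, Real.log (p x) = ∑ A : Finset V, φ A x)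
    (A : Finset V) (x : ∀ j, X j) :
    φ A x = (-1:ℝ)^A.card * ∑ B ∈ A.powerset, (-1:ℝ)^B.card * Real.log (p (llmask B x)) := by
  have h1 : ∀ B ∈ A.powerset, (-1:ℝ)^B.card * Real.log (p (llmask B x))
      = ∑ C ∈ B.powerset, (-1:ℝ)^B.card * φ C x := by
    intro B _
    rw [ll_restrict p φ hloc hzero hexp B x, Finset.mul_sum]
  rw [Finset.sum_congr rfl h1]
  rw [Finset.sum_comm' (s := A.powerset) (t := fun B => B.powerset) (t' := A.powerset)
    (s' := fun C => A.powerset.filter (fun B => C ⊆ B)) (by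
      intro B C
      simp only [Finset.mem_filter, Finset.mem_powerset]
      constructor
      · rintro ⟨hBA, hCB⟩; exact ⟨⟨hBA, hCB⟩, hCB.trans hBA⟩
      · rintro ⟨⟨hBA, hCB⟩, _⟩; exact ⟨hBA, hCB⟩)]
  have h2 : ∀ C ∈ A.powerset,
      (∑ B ∈ A.powerset.filter (fun B => C ⊆ B), (-1:ℝ)^B.card * φ C x)
      = (if C = A then (-1:ℝ)^A.card else 0) * φ C x := by
    intro C hC
    rw [← Finset.sum_mul, ll_inner_sum A C (Finset.mem_powerset.1 hC)]
  rw [Finset.sum_congr rfl h2]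
  simp only [ite_mul, zero_mul]
  rw [Finset.sum_ite_eq' A.powerset A]
  simp only [Finset.mem_powerset, Finset.Subset.refl, if_true]
  rw [← mul_assoc, ← pow_add]
  rw [Even.neg_one_pow ⟨A.card, rfl⟩, one_mul]

lemma ll_toggle (F : (∀ j, X j) → ℝ) (b : V)
    (hF : ∀ y z : ∀ j, X j, (∀ l, l ≠ b → y l = z l) → F y = F z)
    (A : Finset V) (hb : b ∈ A) (x : ∀ j, X j) :
    ∑ B ∈ A.powerset, (-1:ℝ)^B.card * F (llmask B x) = 0 := by
  have gmem : ∀ B ∈ A.powerset, (if b ∈ B then B.erase b else insert b B) ∈ A.powerset := by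
    intro B hB
    rw [Finset.mem_powerset] at hB ⊢
    by_cases hbB : b ∈ B
    · simpa [hbB] using (Finset.erase_subset b B).trans hB
    · simpa [hbB] using Finset.insert_subset hb hB
  refine Finset.sum_involution (fun B _ => if b ∈ B then B.erase b else insert b B)
    ?_ ?_ gmem ?_
  · intro B hB
    have hFeq : F (llmask (if b ∈ B then B.erase b else insert b B) x) = F (llmask B x) := by
      apply hF
      intro l hl
      by_cases hbB : b ∈ B <;> simp [llmask, hbB, Finset.mem_erase, Finset.mem_insert, hl]
    rw [hFeq]
    by_cases hbB : b ∈ B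
    · simp only [hbB, if_true]
      obtain ⟨k, hk⟩ : ∃ k, B.card = k + 1 :=
        ⟨B.card - 1, (Nat.succ_pred_eq_of_pos (Finset.card_pos.2 ⟨b, hbB⟩)).symm⟩
      rw [Finset.card_erase_of_mem hbB, hk]
      simp [pow_succ]
    · simp only [hbB, if_false]
      rw [Finset.card_insert_of_notMem hbB]
      simp [pow_succ]
  · intro B hB _
    by_cases hbB : b ∈ B
    · simp only [hbB, if_true]
      exact fun h => (Finset.erase_ne_self.2 hbB) h
    · simp only [hbB, if_false]
      exact fun h => hbB (h ▸ Finset.mem_insert_self b B)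
  · intro B hB
    by_cases hbB : b ∈ B
    · simp [hbB, Finset.notMem_erase, Finset.insert_erase hbB]
    · simp [hbB, Finset.erase_insert hbB]

end Aux

/-- for a strictly positive distribution with log-linear expansion
`log p(x) = Σ_{A⊆V} φ_A(x_A)` under the zero-identifiability constraint, and a
partition `(V1, V2, V3)` of `V`, the conditional independence
`X_{V1} ⊥ X_{V2} | X_{V3}` (i.e. `p(x) = f(x_{V1},x_{V3}) g(x_{V2},x_{V3})`)
holds iff `φ_A ≡ 0` for every `A` meeting both `V1` and `V2`. -/
theorem condindep_iff_loglinear_zero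
    {V : Type*} [Fintype V] [DecidableEq V] {X : V → Type*}
    [∀ j, Fintype (X j)] [∀ j, DecidableEq (X j)] [∀ j, Zero (X j)]
    (p : (∀ j, X j) → ℝ) (hp : ∀ x, 0 < p x) (hps : ∑ x : ∀ j, X j, p x = 1)
    (φ : Finset V → (∀ j, X j) → ℝ)
    (hloc : ∀ A : Finset V, ∀ x y : ∀ j, X j, (∀ j ∈ A, x j = y j) → φ A x = φ A y)
    (hzero : ∀ A : Finset V, ∀ x : ∀ j, X j, (∃ j ∈ A, x j = 0) → φ A x = 0)
    (hexp : ∀ x : ∀ j, X j, Real.log (p x) = ∑ A : Finset V, φ A x)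
    (V1 V2 V3 : Finset V)
    (h12 : Disjoint V1 V2) (h13 : Disjoint V1 V3) (h23 : Disjoint V2 V3)
    (hcover : V1 ∪ V2 ∪ V3 = Finset.univ) :
    (∃ f g : (∀ j, X j) → ℝ,
        (∀ x y : ∀ j, X j, (∀ l ∈ V1 ∪ V3, x l = y l) → f x = f y) ∧
        (∀ x y : ∀ j, X j, (∀ l ∈ V2 ∪ V3, x l = y l) → g x = g y) ∧
        (∀ x : ∀ j, X j, p x = f x * g x))
      ↔ ∀ A : Finset V, (A ∩ V1).Nonempty → (A ∩ V2).Nonempty →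
          ∀ x : ∀ j, X j, φ A x = 0 := by
  constructor
  · rintro ⟨f, g, hf, hg, hfg⟩ A hA1 hA2 x
    obtain ⟨a, ha⟩ := hA1
    obtain ⟨b, hb⟩ := hA2
    rw [Finset.mem_inter] at ha hb
    have hfne : ∀ y, f y ≠ 0 := by
      intro y hy
      have := hp y
      rw [hfg y, hy, zero_mul] at this
      exact lt_irrefl 0 this
    have hgne : ∀ y, g y ≠ 0 := by
      intro y hy
      have := hp y
      rw [hfg y, hy, mul_zero] at this
      exact lt_irrefl 0 this
    have hlog : ∀ y, Real.log (p y) = Real.log (f y) + Real.log (g y) := by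
      intro y
      rw [hfg y, Real.log_mul (hfne y) (hgne y)]
    rw [ll_mobius p φ hloc hzero hexp A x]
    have hsplit : ∀ B ∈ A.powerset, (-1:ℝ)^B.card * Real.log (p (llmask B x))
        = (-1:ℝ)^B.card * Real.log (f (llmask B x))
          + (-1:ℝ)^B.card * Real.log (g (llmask B x)) := by
      intro B _
      rw [hlog]; ring
    rw [Finset.sum_congr rfl hsplit, Finset.sum_add_distrib]
    have hbV1 : b ∉ V1 := Finset.disjoint_right.1 h12 hb.2
    have hbV3 : b ∉ V3 := Finset.disjoint_left.1 h23 hb.2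
    have haV2 : a ∉ V2 := Finset.disjoint_left.1 h12 ha.2
    have haV3 : a ∉ V3 := Finset.disjoint_left.1 h13 ha.2
    have hFz : ∑ B ∈ A.powerset, (-1:ℝ)^B.card * Real.log (f (llmask B x)) = 0 := by
      apply ll_toggle (fun y => Real.log (f y)) b _ A hb.1 x
      intro y z hyz
      show Real.log (f y) = Real.log (f z)
      refine congrArg Real.log (hf y z fun l hl => hyz l fun hlb => ?_)
      subst hlb
      rcases Finset.mem_union.1 hl with h | h
      · exact hbV1 h
      · exact hbV3 h
    have hGz : ∑ B ∈ A.powerset, (-1:ℝ)^B.card * Real.log (g (llmask B x)) = 0 := by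
      apply ll_toggle (fun y => Real.log (g y)) a _ A ha.1 x
      intro y z hyz
      show Real.log (g y) = Real.log (g z)
      refine congrArg Real.log (hg y z fun l hl => hyz l fun hla => ?_)
      subst hla
      rcases Finset.mem_union.1 hl with h | h
      · exact haV2 h
      · exact haV3 h
    rw [hFz, hGz]
    ring
  · intro h
    refine ⟨fun x => Real.exp (∑ A ∈ Finset.univ.filter (fun A : Finset V => A ∩ V2 = ∅), φ A x),
      fun x => Real.exp (∑ A ∈ Finset.univ.filter (fun A : Finset V => ¬ A ∩ V2 = ∅), φ A x),
      ?_, ?_, ?_⟩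
    · intro x y hxy
      show Real.exp (∑ A ∈ Finset.univ.filter (fun A : Finset V => A ∩ V2 = ∅), φ A x)
        = Real.exp (∑ A ∈ Finset.univ.filter (fun A : Finset V => A ∩ V2 = ∅), φ A y)
      congr 1
      refine Finset.sum_congr rfl fun A hA => ?_
      rw [Finset.mem_filter] at hA
      apply hloc
      intro j hj
      apply hxy
      have hju : j ∈ V1 ∪ V2 ∪ V3 := hcover ▸ Finset.mem_univ j
      have hjV2 : j ∉ V2 := fun hjv =>
        (Finset.eq_empty_iff_forall_notMem.1 hA.2 j) (Finset.mem_inter.2 ⟨hj, hjv⟩)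
      rcases Finset.mem_union.1 hju with h' | h'
      · rcases Finset.mem_union.1 h' with h'' | h''
        · exact Finset.mem_union_left _ h''
        · exact absurd h'' hjV2
      · exact Finset.mem_union_right _ h'
    · intro x y hxy
      show Real.exp (∑ A ∈ Finset.univ.filter (fun A : Finset V => ¬ A ∩ V2 = ∅), φ A x)
        = Real.exp (∑ A ∈ Finset.univ.filter (fun A : Finset V => ¬ A ∩ V2 = ∅), φ A y)
      congr 1
      refine Finset.sum_congr rfl fun A hA => ?_
      rw [Finset.mem_filter] at hA
      by_cases hA1 : (A ∩ V1).Nonempty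
      · rw [h A hA1 (Finset.nonempty_iff_ne_empty.2 hA.2) x,
          h A hA1 (Finset.nonempty_iff_ne_empty.2 hA.2) y]
      · apply hloc
        intro j hj
        apply hxy
        have hju : j ∈ V1 ∪ V2 ∪ V3 := hcover ▸ Finset.mem_univ j
        have hjV1 : j ∉ V1 := fun hjv =>
          hA1 ⟨j, Finset.mem_inter.2 ⟨hj, hjv⟩⟩
        rcases Finset.mem_union.1 hju with h' | h'
        · rcases Finset.mem_union.1 h' with h'' | h''
          · exact absurd h'' hjV1
          · exact Finset.mem_union_left _ h''
        · exact Finset.mem_union_right _ h'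
    · intro x
      show p x = Real.exp (∑ A ∈ Finset.univ.filter (fun A : Finset V => A ∩ V2 = ∅), φ A x)
        * Real.exp (∑ A ∈ Finset.univ.filter (fun A : Finset V => ¬ A ∩ V2 = ∅), φ A x)
      rw [← Real.exp_add, Finset.sum_filter_add_sum_filter_not, ← hexp, Real.exp_log (hp x)]
end

section
/- For fixed r ≥ 2, fixed α_1,…,α_r > 0 with ᾱ = Σ_i α_i, and sequences of counts n_i(n) with Σ_i n_i(n) = n and n_i(n)/n → p_i > 0 for each i, the quantity log Γ(ᾱ) − log Γ(n + ᾱ) + Σ_i [log Γ(n_i(n) + α_i) − log Γ(α_i)] equals Σ_i n_i(n) log(n_i(n)/n) − ((r−1)/2) log n + O(1) as n → ∞. -/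
/-!
Write `log Γ (m + a) = m log m - m + (a - 1/2) log m + R_a(m)`, with `R_a = stirlingRemainder a`.
Log-convexity of `Γ` traps the slope of `log Γ` over `[m, m + a]` between `log (m - 1)` and
`log (m + a)`, so `log Γ (m + a) - log Γ m - a log m → 0`; together with Stirling's formula for
`m!` this gives `R_a(m) → log (2π) / 2`. Inserting the expansion for `m = n` and `m = nᵢ`, the
leading terms cancel because `∑ nᵢ = n`, and what remains is a combination of remainders and of
the terms `(αᵢ - 1/2) log (nᵢ / n) → (αᵢ - 1/2) log pᵢ`: the difference even converges.
-/

open Finset Filter Asymptotics Real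
open scoped Nat Topology

lemma log_Gamma_add_one {x : ℝ} (hx : 0 < x) :
    log (Gamma (x + 1)) = log (Gamma x) + log x := by
  rw [Gamma_add_one hx.ne', log_mul hx.ne' (Gamma_pos_of_pos hx).ne', add_comm]

lemma mul_log_sub_one_le_log_Gamma_add_sub {x a : ℝ} (hx : 1 < x) (ha : 0 < a) :
    a * log (x - 1) ≤ log (Gamma (x + a)) - log (Gamma x) := by
  have hslope := convexOn_log_Gamma.slope_mono_adjacent (x := x - 1) (y := x) (z := x + a)
    (Set.mem_Ioi.2 (by linarith)) (Set.mem_Ioi.2 (by linarith)) (by linarith) (by linarith)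
  have hstep := log_Gamma_add_one (x := x - 1) (by linarith)
  rw [sub_add_cancel] at hstep
  simp only [Function.comp_apply, sub_sub_cancel, div_one, add_sub_cancel_left, hstep,
    le_div_iff₀ ha] at hslope
  linarith

lemma log_Gamma_add_sub_le_mul_log_add {x a : ℝ} (hx : 0 < x) (ha : 0 < a) :
    log (Gamma (x + a)) - log (Gamma x) ≤ a * log (x + a) := by
  have hslope := convexOn_log_Gamma.slope_mono_adjacent (x := x) (y := x + a) (z := x + a + 1)
    (Set.mem_Ioi.2 hx) (Set.mem_Ioi.2 (by linarith)) (by linarith) (by linarith)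
  simp only [Function.comp_apply, add_sub_cancel_left, div_one,
    log_Gamma_add_one (show 0 < x + a by linarith), div_le_iff₀ ha] at hslope
  linarith

lemma tendsto_log_Gamma_add_sub_log_Gamma {a : ℝ} (ha : 0 < a) :
    Tendsto (fun x => log (Gamma (x + a)) - log (Gamma x) - a * log x) atTop (𝓝 0) := by
  have hlower : Tendsto (fun x => a * (log (x - 1) - log x)) atTop (𝓝 0) := by
    simpa [← sub_eq_add_neg] using (tendsto_log_comp_add_sub_log (-1)).const_mul a
  have hupper : Tendsto (fun x => a * (log (x + a) - log x)) atTop (𝓝 0) := by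
    simpa using (tendsto_log_comp_add_sub_log a).const_mul a
  refine tendsto_of_tendsto_of_tendsto_of_le_of_le' hlower hupper ?_ ?_
  · filter_upwards [eventually_gt_atTop 1] with x hx
    linarith [mul_log_sub_one_le_log_Gamma_add_sub hx ha]
  · filter_upwards [eventually_gt_atTop 0] with x hx
    linarith [log_Gamma_add_sub_le_mul_log_add hx ha]

lemma tendsto_log_factorial_sub_stirling :
    Tendsto (fun n : ℕ => log n ! - (n * log n - n + log n / 2)) atTop
      (𝓝 (log (2 * π) / 2)) := by
  have hlimit : log (2 * π) / 2 = log √π + log 2 / 2 := by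
    rw [log_sqrt pi_pos.le, log_mul two_ne_zero pi_pos.ne']
    ring
  rw [hlimit]
  refine (((continuousAt_log (by positivity)).tendsto.comp
    Stirling.tendsto_stirlingSeq_sqrt_pi).add_const _).congr' ?_
  filter_upwards [eventually_gt_atTop 0] with n hn
  have hn : (n : ℝ) ≠ 0 := by positivity
  rw [Function.comp_apply, Stirling.log_stirlingSeq_formula, log_mul two_ne_zero hn,
    log_div hn (exp_ne_zero 1), log_exp]
  ring

noncomputable def stirlingRemainder (a x : ℝ) : ℝ :=
  log (Gamma (x + a)) - (x * log x - x + (a - 1 / 2) * log x)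

lemma tendsto_stirlingRemainder_natCast {a : ℝ} (ha : 0 < a) :
    Tendsto (fun n : ℕ => stirlingRemainder a n) atTop (𝓝 (log (2 * π) / 2)) := by
  have h := ((tendsto_log_Gamma_add_sub_log_Gamma ha).comp tendsto_natCast_atTop_atTop).add
    tendsto_log_factorial_sub_stirling
  rw [zero_add] at h
  refine h.congr' ?_
  filter_upwards [eventually_gt_atTop 0] with n hn
  have hfactorial : log n ! = log (Gamma n) + log n := by
    rw [← Gamma_nat_eq_factorial, log_Gamma_add_one (by positivity)]
  rw [Function.comp_apply, hfactorial, stirlingRemainder]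
  ring

lemma tendsto_atTop_of_tendsto_div_natCast {u : ℕ → ℕ} {p : ℝ} (hp : 0 < p)
    (hu : Tendsto (fun n : ℕ => (u n : ℝ) / n) atTop (𝓝 p)) : Tendsto u atTop atTop := by
  rw [← tendsto_natCast_atTop_iff (R := ℝ)]
  refine (hu.pos_mul_atTop hp tendsto_natCast_atTop_atTop).congr' ?_
  filter_upwards [eventually_ne_atTop 0] with n hn
  field_simp

lemma log_dirichlet_marginal_sub_expansion_eq {ι : Type*} [Fintype ι] (α : ι → ℝ)
    (k : ι → ℕ) (N : ℕ) (hk : ∀ i, 0 < k i) (hN : ∑ i, k i = N) :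
    log (Gamma (∑ i, α i)) - log (Gamma (N + ∑ i, α i))
        + ∑ i, (log (Gamma (k i + α i)) - log (Gamma (α i)))
      - (∑ i, (k i : ℝ) * log (k i / N) - ((Fintype.card ι : ℝ) - 1) / 2 * log N)
    = log (Gamma (∑ i, α i)) - ∑ i, log (Gamma (α i)) - stirlingRemainder (∑ i, α i) N
      + ∑ i, (stirlingRemainder (α i) (k i) + (α i - 1 / 2) * log (k i / N)) := by
  have hlog (i : ι) : log (k i / N) = log (k i) - log N := by
    have hki : k i ≤ N := hN ▸ single_le_sum (fun j _ => Nat.zero_le (k j)) (mem_univ i)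
    exact log_div (by exact_mod_cast (hk i).ne') (by exact_mod_cast (hk i).trans_le hki |>.ne')
  have hsum : ∑ i, (k i : ℝ) = N := by exact_mod_cast hN
  simp only [stirlingRemainder, hlog, mul_sub, sub_mul, sum_add_distrib, sum_sub_distrib,
    ← sum_mul, hsum, sum_const, card_univ, nsmul_eq_mul]
  ring

theorem mpl_score_asymptotics_general (r : ℕ)
    (α : Fin r → ℝ) (hα : ∀ i, 0 < α i)
    (nc : ℕ → Fin r → ℕ) (hsum : ∀ n, ∑ i, nc n i = n)
    (p : Fin r → ℝ) (hp : ∀ i, 0 < p i)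
    (hlim : ∀ i, Tendsto (fun n : ℕ => (nc n i : ℝ) / (n : ℝ)) atTop (nhds (p i))) :
    (fun n : ℕ =>
        (Real.log (Real.Gamma (∑ i, α i)) - Real.log (Real.Gamma ((n : ℝ) + ∑ i, α i))
            + ∑ i, (Real.log (Real.Gamma ((nc n i : ℝ) + α i)) - Real.log (Real.Gamma (α i))))
          - (∑ i, (nc n i : ℝ) * Real.log ((nc n i : ℝ) / (n : ℝ))
              - ((r : ℝ) - 1) / 2 * Real.log (n : ℝ)))
      =O[atTop] (fun _ => (1 : ℝ)) := by
  have : Nonempty (Fin r) := by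
    by_contra hempty
    simpa [not_nonempty_iff.mp hempty] using hsum 1
  have hcounts (i : Fin r) : Tendsto (nc · i) atTop atTop :=
    tendsto_atTop_of_tendsto_div_natCast (hp i) (hlim i)
  have hconv : Tendsto (fun n : ℕ => log (Gamma (∑ i, α i)) - ∑ i, log (Gamma (α i))
      - stirlingRemainder (∑ i, α i) n
      + ∑ i, (stirlingRemainder (α i) (nc n i) + (α i - 1 / 2) * log (nc n i / n))) atTop
      (𝓝 _) :=
    (tendsto_const_nhds.sub (tendsto_stirlingRemainder_natCast
      (sum_pos (fun i _ => hα i) univ_nonempty))).add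
    (tendsto_finsetSum _ fun i _ => ((tendsto_stirlingRemainder_natCast (hα i)).comp
      (hcounts i)).add (((hlim i).log (hp i).ne').const_mul _))
  refine (hconv.isBigO_one ℝ).congr' ?_ EventuallyEq.rfl
  filter_upwards [eventually_all.2 fun i => (hcounts i).eventually_gt_atTop 0] with n hn
  have hidentity := log_dirichlet_marginal_sub_expansion_eq α (nc n) n hn (hsum n)
  rw [Fintype.card_fin] at hidentity
  exact hidentity.symm

/-- asymptotic expansion of the local marginal pseudo-likelihood score:
`log Γ(ᾱ) − log Γ(n+ᾱ) + Σ_i [log Γ(n_i+α_i) − log Γ(α_i)]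
  = Σ_i n_i log(n_i/n) − ((r−1)/2) log n + O(1)` as `n → ∞`. -/
theorem mpl_score_asymptotics (r : ℕ) (hr : 2 ≤ r)
    (α : Fin r → ℝ) (hα : ∀ i, 0 < α i)
    (nc : ℕ → Fin r → ℕ) (hsum : ∀ n, ∑ i, nc n i = n)
    (p : Fin r → ℝ) (hp : ∀ i, 0 < p i)
    (hlim : ∀ i, Tendsto (fun n : ℕ => (nc n i : ℝ) / (n : ℝ)) atTop (nhds (p i))) :
    (fun n : ℕ =>
        (Real.log (Real.Gamma (∑ i, α i)) - Real.log (Real.Gamma ((n : ℝ) + ∑ i, α i))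
            + ∑ i, (Real.log (Real.Gamma ((nc n i : ℝ) + α i)) - Real.log (Real.Gamma (α i))))
          - (∑ i, (nc n i : ℝ) * Real.log ((nc n i : ℝ) / (n : ℝ))
              - ((r : ℝ) - 1) / 2 * Real.log (n : ℝ)))
      =O[atTop] (fun _ => (1 : ℝ)) :=
  mpl_score_asymptotics_general r α hα nc hsum p hp hlim
end

section
/- Let p be a strictly positive distribution on a finite product space satisfying the local Markov property of a graph G, and let {i,j} ∈ E with common-neighbor set cn(i,j) = mb(i) ∩ mb(j). For a fixed x_{cn(i,j)}, the statement X_i ⊥ X_j | x_{cn(i,j)}, X_{V∖(cn(i,j)∪{i,j})} is equivalent to the conjunction of the two statements X_i ⊥ X_j | x_{cn(i,j)}, X_{mb(i)∖(cn(i,j)∪{j})} and X_j ⊥ X_i | x_{cn(i,j)}, X_{mb(j)∖(cn(i,j)∪{i})}. -/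
open Finset

variable {V : Type*} [Fintype V] [DecidableEq V] {X : V → Type*}
  [∀ j, Fintype (X j)] [∀ j, DecidableEq (X j)]

lemma marg_update (p : (∀ j, X j) → ℝ) {S : Finset V} {i : V} (h : i ∉ S) (x : ∀ j, X j)
    (a : X i) : marg p S (Function.update x i a) = marg p S x := by
  unfold marg
  congr 1
  ext y
  simp only [mem_filter, mem_univ, true_and]
  exact forall₂_congr fun l hl => by
    rw [Function.update_of_ne (fun e => h (by simpa [e] using hl)) a x]

lemma marg_split (p : (∀ j, X j) → ℝ) {S : Finset V} {i : V} (h : i ∉ S) (x : ∀ j, X j) :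
    marg p S x = ∑ a : X i, marg p (insert i S) (Function.update x i a) := by
  unfold marg
  rw [← Finset.sum_fiberwise (Finset.univ.filter (fun y : ∀ j, X j => ∀ j ∈ S, y j = x j))
    (fun y => y i) p]
  refine Finset.sum_congr rfl fun a _ => ?_
  congr 1
  ext y
  simp only [mem_filter, mem_univ, true_and, Finset.forall_mem_insert, Function.update_self]
  constructor
  · rintro ⟨hS, hi⟩
    exact ⟨hi, fun l hl => by rw [Function.update_of_ne (fun e => h (by simpa [e] using hl))]; exact hS l hl⟩
  · rintro ⟨hi, hS⟩
    exact ⟨fun l hl => by have := hS l hl; rwa [Function.update_of_ne (fun e => h (by simpa [e] using hl))] at this, hi⟩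

lemma indep_char {A B : Type*} [Fintype A] [Fintype B] [Nonempty A] [Nonempty B]
    (t : A → B → ℝ) (ht : ∀ a b, 0 < t a b) :
    (∀ a b, t a b * (∑ a', ∑ b', t a' b') = (∑ b', t a b') * (∑ a', t a' b)) ↔
    (∀ a b b', t a b * (∑ a', t a' b') = t a b' * (∑ a', t a' b)) := by
  have htot : 0 < ∑ a', ∑ b', t a' b' :=
    Finset.sum_pos (fun a _ => Finset.sum_pos (fun b _ => ht a b) univ_nonempty) univ_nonempty
  constructor
  · intro h a b b'
    have h1 := h a b
    have h2 := h a b'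
    apply mul_right_cancel₀ (ne_of_gt htot)
    calc t a b * (∑ a', t a' b') * (∑ a', ∑ b', t a' b')
        = (t a b * (∑ a', ∑ b', t a' b')) * (∑ a', t a' b') := by ring
      _ = ((∑ b', t a b') * (∑ a', t a' b)) * (∑ a', t a' b') := by rw [h1]
      _ = (t a b' * (∑ a', ∑ b', t a' b')) * (∑ a', t a' b) := by rw [h2]; ring
      _ = t a b' * (∑ a', t a' b) * (∑ a', ∑ b', t a' b') := by ring
  · intro h a b
    have : t a b * (∑ a', ∑ b', t a' b') = ∑ b', t a b * (∑ a', t a' b') := by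
      rw [Finset.sum_comm, Finset.mul_sum]
    rw [this]
    simp_rw [h a b]
    rw [← Finset.sum_mul]

lemma ratio_transfer {A B : Type*} [Fintype A] [Nonempty A] (q r : A → B → ℝ)
    (hq : ∀ a b, 0 < q a b) (hr : ∀ a b, 0 < r a b)
    (hlink : ∀ a b, q a b * (∑ a', r a' b) = r a b * (∑ a', q a' b)) :
    (∀ a b b', q a b * (∑ a', q a' b') = q a b' * (∑ a', q a' b)) ↔
    (∀ a b b', r a b * (∑ a', r a' b') = r a b' * (∑ a', r a' b)) := by
  have hcq : ∀ b, (0:ℝ) < ∑ a', q a' b := fun b => Finset.sum_pos (fun a _ => hq a b) univ_nonempty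
  have hcr : ∀ b, (0:ℝ) < ∑ a', r a' b := fun b => Finset.sum_pos (fun a _ => hr a b) univ_nonempty
  have key : ∀ a b, q a b / (∑ a', q a' b) = r a b / (∑ a', r a' b) := fun a b => by
    rw [div_eq_div_iff (ne_of_gt (hcq b)) (ne_of_gt (hcr b))]
    linarith [hlink a b]
  have char : ∀ (t : A → B → ℝ), (∀ b, (0:ℝ) < ∑ a', t a' b) →
      ((∀ a b b', t a b * (∑ a', t a' b') = t a b' * (∑ a', t a' b)) ↔
       (∀ a b b', t a b / (∑ a', t a' b) = t a b' / (∑ a', t a' b'))) := by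
    intro t hc
    constructor <;> intro h a b b'
    · rw [div_eq_div_iff (ne_of_gt (hc b)) (ne_of_gt (hc b'))]
      linarith [h a b b']
    · have := h a b b'
      rw [div_eq_div_iff (ne_of_gt (hc b)) (ne_of_gt (hc b'))] at this
      linarith
  rw [char q hcq, char r hcr]
  constructor <;> intro h a b b'
  · rw [← key a b, ← key a b']
    exact h a b b'
  · rw [key a b, key a b']
    exact h a b b'

lemma point_equiv [∀ l, Nonempty (X l)] (p : (∀ l, X l) → ℝ) (hp : ∀ x, 0 < p x)
    {i j : V} (hij : i ≠ j) {N : Finset V} (hiN : i ∉ N) (hjN : j ∈ N)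
    (hloc : ∀ y, p y * marg p N y = marg p (insert i N) y * marg p (Finset.univ \ {i}) y)
    (x : ∀ l, X l) :
    (∀ (a : X i) (b : X j),
        p (Function.update (Function.update x j b) i a)
          * marg p (Finset.univ \ {i, j}) (Function.update (Function.update x j b) i a)
        = marg p (Finset.univ \ {j}) (Function.update (Function.update x j b) i a)
          * marg p (Finset.univ \ {i}) (Function.update (Function.update x j b) i a)) ↔
    (∀ (a : X i) (b : X j),
        marg p (insert i N) (Function.update (Function.update x j b) i a)
          * marg p (N \ {j}) (Function.update (Function.update x j b) i a)
        = marg p (insert i N \ {j}) (Function.update (Function.update x j b) i a)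
          * marg p N (Function.update (Function.update x j b) i a)) := by
  have hmem₁ : i ∉ (Finset.univ \ ({i, j} : Finset V)) := by simp
  have hmem₂ : j ∉ (Finset.univ \ ({i, j} : Finset V)) := by simp
  have hmem₃ : j ∉ (Finset.univ \ ({j} : Finset V)) := by simp
  have hmem₄ : i ∉ (Finset.univ \ ({i} : Finset V)) := by simp
  have hmem₅ : i ∉ N \ ({j} : Finset V) := by simp [hiN]
  have hmem₆ : j ∉ insert i N \ ({j} : Finset V) := by simp
  have hmem₈ : j ∉ N \ ({j} : Finset V) := by simp
  have hs₁ : insert i (Finset.univ \ ({i, j} : Finset V)) = Finset.univ \ {j} := by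
    ext k
    rcases eq_or_ne k i with rfl | hk
    · simp [hij]
    · simp [hk]
  have hs₂ : insert j (Finset.univ \ ({j} : Finset V)) = Finset.univ := by
    ext k
    rcases eq_or_ne k j with rfl | hk
    · simp
    · simp [hk]
  have hs₃ : insert i (Finset.univ \ ({i} : Finset V)) = Finset.univ := by
    ext k
    rcases eq_or_ne k i with rfl | hk
    · simp
    · simp [hk]
  have hs₄ : insert i (N \ ({j} : Finset V)) = insert i N \ {j} := by
    ext k
    rcases eq_or_ne k i with rfl | hk
    · simp [hij]
    · simp [hk]
  have hs₅ : insert j (insert i N \ ({j} : Finset V)) = insert i N := by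
    ext k
    rcases eq_or_ne k j with rfl | hk
    · simp [hjN]
    · simp [hk]
  have hcomm : ∀ (a : X i) (b : X j) (y : ∀ l, X l),
      Function.update (Function.update y i a) j b
        = Function.update (Function.update y j b) i a :=
    fun a b y => Function.update_comm hij a b y
  have E1 : ∀ (a : X i) (b : X j),
      marg p (Finset.univ \ {i, j}) (Function.update (Function.update x j b) i a)
        = ∑ a' : X i, ∑ b' : X j, p (Function.update (Function.update x j b') i a') := by
    intro a b
    rw [marg_update p hmem₁, marg_update p hmem₂, marg_split p hmem₁ x]
    simp only [hs₁]
    refine Finset.sum_congr rfl fun a' _ => ?_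
    rw [marg_split p hmem₃]
    simp only [hs₂, marg_univ, hcomm]
  have E2 : ∀ (a : X i) (b : X j),
      marg p (Finset.univ \ {j}) (Function.update (Function.update x j b) i a)
        = ∑ b' : X j, p (Function.update (Function.update x j b') i a) := by
    intro a b
    rw [← hcomm, marg_update p hmem₃, marg_split p hmem₃]
    simp only [hs₂, marg_univ, hcomm]
  have E3 : ∀ (a : X i) (b : X j),
      marg p (Finset.univ \ {i}) (Function.update (Function.update x j b) i a)
        = ∑ a' : X i, p (Function.update (Function.update x j b) i a') := by
    intro a b
    rw [marg_update p hmem₄, marg_split p hmem₄]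
    simp only [hs₃, marg_univ]
  have F1 : ∀ (a : X i) (b : X j),
      marg p (N \ {j}) (Function.update (Function.update x j b) i a)
        = ∑ a' : X i, ∑ b' : X j,
            marg p (insert i N) (Function.update (Function.update x j b') i a') := by
    intro a b
    rw [marg_update p hmem₅, marg_update p hmem₈, marg_split p hmem₅ x]
    simp only [hs₄]
    refine Finset.sum_congr rfl fun a' _ => ?_
    rw [marg_split p hmem₆]
    simp only [hs₅, hcomm]
  have F2 : ∀ (a : X i) (b : X j),
      marg p (insert i N \ {j}) (Function.update (Function.update x j b) i a)
        = ∑ b' : X j, marg p (insert i N) (Function.update (Function.update x j b') i a) := by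
    intro a b
    rw [← hcomm, marg_update p hmem₆, marg_split p hmem₆]
    simp only [hs₅, hcomm]
  have F3 : ∀ (a : X i) (b : X j),
      marg p N (Function.update (Function.update x j b) i a)
        = ∑ a' : X i, marg p (insert i N) (Function.update (Function.update x j b) i a') := by
    intro a b
    rw [marg_update p hiN, marg_split p hiN]
  have hq : ∀ (a : X i) (b : X j), 0 < p (Function.update (Function.update x j b) i a) :=
    fun a b => hp _
  have hr : ∀ (a : X i) (b : X j),
      0 < marg p (insert i N) (Function.update (Function.update x j b) i a) :=
    fun a b => marg_pos p hp _ _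
  have hlink : ∀ (a : X i) (b : X j),
      p (Function.update (Function.update x j b) i a)
        * (∑ a' : X i, marg p (insert i N) (Function.update (Function.update x j b) i a'))
      = marg p (insert i N) (Function.update (Function.update x j b) i a)
        * (∑ a' : X i, p (Function.update (Function.update x j b) i a')) := by
    intro a b
    have := hloc (Function.update (Function.update x j b) i a)
    rw [F3 a b, E3 a b] at this
    exact this
  have main := (indep_char (fun a b => p (Function.update (Function.update x j b) i a)) hq).trans
    ((ratio_transfer (fun a b => p (Function.update (Function.update x j b) i a))
        (fun a b => marg p (insert i N) (Function.update (Function.update x j b) i a))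
        hq hr hlink).trans
      (indep_char (fun a b => marg p (insert i N) (Function.update (Function.update x j b) i a)) hr).symm)
  constructor
  · intro H a b
    rw [F1 a b, F2 a b, F3 a b]
    refine main.mp (fun a' b' => ?_) a b
    have := H a' b'
    rw [E1 a' b', E2 a' b', E3 a' b'] at this
    exact this
  · intro H a b
    rw [E1 a b, E2 a b, E3 a b]
    refine main.mpr (fun a' b' => ?_) a b
    have := H a' b'
    rw [F1 a' b', F2 a' b', F3 a' b'] at this
    exact this

lemma blanket_equiv [∀ l, Nonempty (X l)] (p : (∀ l, X l) → ℝ) (hp : ∀ x, 0 < p x)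
    {i j : V} (hij : i ≠ j) {N : Finset V} (hiN : i ∉ N) (hjN : j ∈ N)
    (hloc : ∀ y, p y * marg p N y = marg p (insert i N) y * marg p (Finset.univ \ {i}) y)
    (Cd : (∀ l, X l) → Prop)
    (hCd : ∀ x (a : X i) (b : X j), Cd x → Cd (Function.update (Function.update x j b) i a)) :
    (∀ x, Cd x → p x * marg p (Finset.univ \ {i, j}) x
        = marg p (Finset.univ \ {j}) x * marg p (Finset.univ \ {i}) x) ↔
    (∀ x, Cd x → marg p (insert i N) x * marg p (N \ {j}) x
        = marg p (insert i N \ {j}) x * marg p N x) := by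
  have hself : ∀ x : ∀ l, X l, Function.update (Function.update x j (x j)) i (x i) = x := by
    intro x
    rw [Function.update_eq_self, Function.update_eq_self]
  constructor
  · intro H x hx
    have h := (point_equiv p hp hij hiN hjN hloc x).mp
      (fun a b => H _ (hCd x a b hx)) (x i) (x j)
    rwa [hself x] at h
  · intro H x hx
    have h := (point_equiv p hp hij hiN hjN hloc x).mpr
      (fun a b => H _ (hCd x a b hx)) (x i) (x j)
    rwa [hself x] at h

/-- equivalence (11) of the paper: for `p` satisfying the local Markov
property of `G` and an edge `{i,j}` with common neighbors `cn = mb(i) ∩ mb(j)`, the CSI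
`X_i ⊥ X_j | x_cn, X_{V∖(cn∪{i,j})}` is equivalent to the conjunction of
`X_i ⊥ X_j | x_cn, X_{mb(i)∖(cn∪{j})}` and `X_j ⊥ X_i | x_cn, X_{mb(j)∖(cn∪{i})}`. -/
theorem csi_markov_blanket_equiv (G : SimpleGraph V) [DecidableRel G.Adj]
    (p : (∀ j, X j) → ℝ) (hp : ∀ x, 0 < p x) (hps : ∑ x : ∀ j, X j, p x = 1)
    (hlocal : ∀ j : V, CondIndep p {j}
      (Finset.univ \ insert j (G.neighborFinset j)) (G.neighborFinset j))
    (i j : V) (hij : G.Adj i j) (xc : ∀ l, X l) :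
    CSI p {i} {j} (G.neighborFinset i ∩ G.neighborFinset j)
        (Finset.univ \ ((G.neighborFinset i ∩ G.neighborFinset j) ∪ {i, j})) xc
      ↔ (CSI p {i} {j} (G.neighborFinset i ∩ G.neighborFinset j)
            (G.neighborFinset i \ ((G.neighborFinset i ∩ G.neighborFinset j) ∪ {j})) xc
          ∧ CSI p {j} {i} (G.neighborFinset i ∩ G.neighborFinset j)
            (G.neighborFinset j \ ((G.neighborFinset i ∩ G.neighborFinset j) ∪ {i})) xc) := by
  haveI hne : ∀ l, Nonempty (X l) := by
    have h0 : Nonempty (∀ l, X l) := by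
      by_contra h
      rw [not_nonempty_iff] at h
      rw [Finset.univ_eq_empty, Finset.sum_empty] at hps
      exact one_ne_zero hps.symm
    exact fun l => ⟨Classical.choice h0 l⟩
  have hij' : i ≠ j := hij.ne
  set Ni := G.neighborFinset i with hNi
  set Nj := G.neighborFinset j with hNj
  have hiNi : i ∉ Ni := by simp [hNi]
  have hjNj : j ∉ Nj := by simp [hNj]
  have hjNi : j ∈ Ni := by rw [hNi, SimpleGraph.mem_neighborFinset]; exact hij
  have hiNj : i ∈ Nj := by rw [hNj, SimpleGraph.mem_neighborFinset]; exact hij.symm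
  clear_value Ni Nj
  -- clean local Markov statements
  have ei1 : ({i} : Finset V) ∪ (Finset.univ \ insert i Ni) ∪ Ni = Finset.univ := by
    ext k; simp; tauto
  have ei2 : ({i} : Finset V) ∪ Ni = insert i Ni := (Finset.insert_eq i Ni).symm
  have ei3 : (Finset.univ \ insert i Ni) ∪ Ni = Finset.univ \ {i} := by
    ext k
    rcases eq_or_ne k i with rfl | hk
    · simp [hiNi]
    · simp [hk] <;> tauto
  have hloci : ∀ y, p y * marg p Ni y = marg p (insert i Ni) y * marg p (Finset.univ \ {i}) y := by
    intro y
    have := hlocal i y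
    rw [← hNi] at this
    rwa [ei1, ei2, ei3, marg_univ] at this
  have ej1 : ({j} : Finset V) ∪ (Finset.univ \ insert j Nj) ∪ Nj = Finset.univ := by
    ext k; simp; tauto
  have ej2 : ({j} : Finset V) ∪ Nj = insert j Nj := (Finset.insert_eq j Nj).symm
  have ej3 : (Finset.univ \ insert j Nj) ∪ Nj = Finset.univ \ {j} := by
    ext k
    rcases eq_or_ne k j with rfl | hk
    · simp [hjNj]
    · simp [hk] <;> tauto
  have hlocj : ∀ y, p y * marg p Nj y = marg p (insert j Nj) y * marg p (Finset.univ \ {j}) y := by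
    intro y
    have := hlocal j y
    rw [← hNj] at this
    rwa [ej1, ej2, ej3, marg_univ] at this
  -- context condition
  set Cd : (∀ l, X l) → Prop := fun x => ∀ l ∈ Ni ∩ Nj, x l = xc l with hCd_def
  have hCdij : ∀ x (a : X i) (b : X j), Cd x → Cd (Function.update (Function.update x j b) i a) := by
    intro x a b h l hl
    have h1 : l ≠ i := fun e => hiNi (by rw [← e]; exact (Finset.mem_inter.mp hl).1)
    have h2 : l ≠ j := fun e => hjNj (by rw [← e]; exact (Finset.mem_inter.mp hl).2)
    rw [Function.update_of_ne h1, Function.update_of_ne h2]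
    exact h l hl
  have hCdji : ∀ x (a : X j) (b : X i), Cd x → Cd (Function.update (Function.update x i b) j a) := by
    intro x a b h l hl
    have h1 : l ≠ i := fun e => hiNi (by rw [← e]; exact (Finset.mem_inter.mp hl).1)
    have h2 : l ≠ j := fun e => hjNj (by rw [← e]; exact (Finset.mem_inter.mp hl).2)
    rw [Function.update_of_ne h2, Function.update_of_ne h1]
    exact h l hl
  -- set identities for the three CSI statements
  have ef1 : ({i} : Finset V) ∪ {j} ∪ (Ni ∩ Nj) ∪ (Finset.univ \ (Ni ∩ Nj ∪ {i, j}))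
      = Finset.univ := by
    ext k; simp
  have ef2 : (Ni ∩ Nj) ∪ (Finset.univ \ (Ni ∩ Nj ∪ {i, j})) = Finset.univ \ {i, j} := by
    ext k
    rcases eq_or_ne k i with rfl | hki
    · simp [hiNi]
    · rcases eq_or_ne k j with rfl | hkj
      · simp [hjNj]
      · simp [hki, hkj] <;> tauto
  have ef3 : ({i} : Finset V) ∪ (Ni ∩ Nj) ∪ (Finset.univ \ (Ni ∩ Nj ∪ {i, j}))
      = Finset.univ \ {j} := by
    ext k
    rcases eq_or_ne k i with rfl | hki
    · simp [hij']
    · rcases eq_or_ne k j with rfl | hkj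
      · simp [hjNj, hki]
      · simp [hki, hkj] <;> tauto
  have ef4 : ({j} : Finset V) ∪ (Ni ∩ Nj) ∪ (Finset.univ \ (Ni ∩ Nj ∪ {i, j}))
      = Finset.univ \ {i} := by
    ext k
    rcases eq_or_ne k j with rfl | hkj
    · simp [hij'.symm]
    · rcases eq_or_ne k i with rfl | hki
      · simp [hiNi, hkj]
      · simp [hki, hkj] <;> tauto
  have ea1 : ({i} : Finset V) ∪ {j} ∪ (Ni ∩ Nj) ∪ (Ni \ (Ni ∩ Nj ∪ {j})) = insert i Ni := by
    ext k
    rcases eq_or_ne k i with rfl | hki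
    · simp
    · rcases eq_or_ne k j with rfl | hkj
      · simp [hjNi]
      · simp [hki, hkj] <;> tauto
  have ea2 : (Ni ∩ Nj) ∪ (Ni \ (Ni ∩ Nj ∪ {j})) = Ni \ {j} := by
    ext k
    rcases eq_or_ne k j with rfl | hkj
    · simp [hjNj]
    · simp [hkj] <;> tauto
  have ea3 : ({i} : Finset V) ∪ (Ni ∩ Nj) ∪ (Ni \ (Ni ∩ Nj ∪ {j})) = insert i Ni \ {j} := by
    ext k
    rcases eq_or_ne k i with rfl | hki
    · simp [hij']
    · rcases eq_or_ne k j with rfl | hkj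
      · simp [hjNj, hki]
      · simp [hki, hkj] <;> tauto
  have ea4 : ({j} : Finset V) ∪ (Ni ∩ Nj) ∪ (Ni \ (Ni ∩ Nj ∪ {j})) = Ni := by
    ext k
    rcases eq_or_ne k j with rfl | hkj
    · simp [hjNi]
    · simp [hkj] <;> tauto
  have eb1 : ({j} : Finset V) ∪ {i} ∪ (Ni ∩ Nj) ∪ (Nj \ (Ni ∩ Nj ∪ {i})) = insert j Nj := by
    ext k
    rcases eq_or_ne k j with rfl | hkj
    · simp
    · rcases eq_or_ne k i with rfl | hki
      · simp [hiNj]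
      · simp [hki, hkj] <;> tauto
  have eb2 : (Ni ∩ Nj) ∪ (Nj \ (Ni ∩ Nj ∪ {i})) = Nj \ {i} := by
    ext k
    rcases eq_or_ne k i with rfl | hki
    · simp [hiNi]
    · simp [hki] <;> tauto
  have eb3 : ({j} : Finset V) ∪ (Ni ∩ Nj) ∪ (Nj \ (Ni ∩ Nj ∪ {i})) = insert j Nj \ {i} := by
    ext k
    rcases eq_or_ne k j with rfl | hkj
    · simp [hij'.symm]
    · rcases eq_or_ne k i with rfl | hki
      · simp [hiNi, hkj]
      · simp [hki, hkj] <;> tauto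
  have eb4 : ({i} : Finset V) ∪ (Ni ∩ Nj) ∪ (Nj \ (Ni ∩ Nj ∪ {i})) = Nj := by
    ext k
    rcases eq_or_ne k i with rfl | hki
    · simp [hiNj]
    · simp [hki] <;> tauto
  -- translate the three CSI statements to clean form
  have EqFull : CSI p {i} {j} (Ni ∩ Nj) (Finset.univ \ (Ni ∩ Nj ∪ {i, j})) xc ↔
      (∀ x, Cd x → p x * marg p (Finset.univ \ {i, j}) x
        = marg p (Finset.univ \ {j}) x * marg p (Finset.univ \ {i}) x) := by
    unfold CSI
    constructor <;> intro h x hx <;> have := h x hx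
    · rwa [ef1, ef2, ef3, ef4, marg_univ] at this
    · rwa [ef1, ef2, ef3, ef4, marg_univ]
  have Eq1 : CSI p {i} {j} (Ni ∩ Nj) (Ni \ (Ni ∩ Nj ∪ {j})) xc ↔
      (∀ x, Cd x → marg p (insert i Ni) x * marg p (Ni \ {j}) x
        = marg p (insert i Ni \ {j}) x * marg p Ni x) := by
    unfold CSI
    constructor <;> intro h x hx <;> have := h x hx
    · rwa [ea1, ea2, ea3, ea4] at this
    · rwa [ea1, ea2, ea3, ea4]
  have Eq2 : CSI p {j} {i} (Ni ∩ Nj) (Nj \ (Ni ∩ Nj ∪ {i})) xc ↔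
      (∀ x, Cd x → marg p (insert j Nj) x * marg p (Nj \ {i}) x
        = marg p (insert j Nj \ {i}) x * marg p Nj x) := by
    unfold CSI
    constructor <;> intro h x hx <;> have := h x hx
    · rwa [eb1, eb2, eb3, eb4] at this
    · rwa [eb1, eb2, eb3, eb4]
  rw [EqFull, Eq1, Eq2]
  have B1 := blanket_equiv p hp hij' hiNi hjNi hloci Cd hCdij
  have B2 := blanket_equiv p hp hij'.symm hjNj hiNj hlocj Cd hCdji
  simp only [Finset.pair_comm j i] at B2
  have B2' : (∀ x, Cd x → p x * marg p (Finset.univ \ {i, j}) x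
      = marg p (Finset.univ \ {j}) x * marg p (Finset.univ \ {i}) x) ↔
      (∀ x, Cd x → marg p (insert j Nj) x * marg p (Nj \ {i}) x
        = marg p (insert j Nj \ {i}) x * marg p Nj x) := by
    rw [← B2]
    constructor <;> intro h x hx <;> have := h x hx <;> linarith
  constructor
  · intro h
    exact ⟨B1.mp h, B2'.mp h⟩
  · rintro ⟨h1, _⟩
    exact B1.mpr h1
end

section
/- Fix r ≥ 2 and two sequences of counts n_{i1}(n), n_{i2}(n) (i = 1,…,r) with column sums n_1(n), n_2(n), such that n_1(n)/n → c_1 > 0, n_2(n)/n → c_2 > 0, n_{i1}(n)/n_1(n) → p_i > 0 and n_{i2}(n)/n_2(n) → q_i > 0, where (p_i) ≠ (q_i) as probability vectors. Then the difference [Σ_i (n_{i1}+n_{i2}) log((n_{i1}+n_{i2})/(n_1+n_2)) − Σ_i n_{i1} log(n_{i1}/n_1) − Σ_i n_{i2} log(n_{i2}/n_2)] + ((r−1)/2) log n tends to −∞ as n → ∞. -/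
open Finset Filter

/-- `Δ₁`-type quantity: maximized log-likelihood of the merged column minus the sum of
the maximized log-likelihoods of the two separate columns. -/
noncomputable def mergeDelta (r : ℕ) (a b : Fin r → ℝ) : ℝ :=
  (∑ i, (a i + b i) * Real.log ((a i + b i) / ((∑ i', a i') + ∑ i', b i')))
    - (∑ i, a i * Real.log (a i / ∑ i', a i'))
    - (∑ i, b i * Real.log (b i / ∑ i', b i'))

/-- Gibbs' inequality (strict form). -/
lemma gibbs {r : ℕ} (p m : Fin r → ℝ) (hp : ∀ i, 0 < p i) (hm : ∀ i, 0 < m i)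
    (hsum : ∑ i, m i = ∑ i, p i) (j : Fin r) (hj : p j ≠ m j) :
    0 < ∑ i, p i * Real.log (p i / m i) := by
  have key : ∑ i, p i * Real.log (m i / p i) < ∑ i : Fin r, (m i - p i) := by
    apply Finset.sum_lt_sum
    · intro i _
      have h := Real.log_le_sub_one_of_pos (div_pos (hm i) (hp i))
      have := mul_le_mul_of_nonneg_left h (hp i).le
      calc p i * Real.log (m i / p i) ≤ p i * (m i / p i - 1) := this
        _ = m i - p i := by field_simp [(hp i).ne']
    · refine ⟨j, Finset.mem_univ j, ?_⟩
      have hne : m j / p j ≠ 1 := by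
        intro h
        apply hj
        rw [div_eq_one_iff_eq (hp j).ne'] at h
        exact h.symm
      have h := Real.log_lt_sub_one_of_pos (div_pos (hm j) (hp j)) hne
      calc p j * Real.log (m j / p j) < p j * (m j / p j - 1) :=
            (mul_lt_mul_iff_right₀ (hp j)).2 h
        _ = m j - p j := by field_simp [(hp j).ne']
  have hz : ∑ i : Fin r, (m i - p i) = 0 := by
    rw [Finset.sum_sub_distrib, hsum]; ring
  have heq : ∑ i, p i * Real.log (p i / m i) = -∑ i, p i * Real.log (m i / p i) := by
    rw [← Finset.sum_neg_distrib]
    refine Finset.sum_congr rfl fun i _ => ?_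
    rw [Real.log_div (hp i).ne' (hm i).ne', Real.log_div (hm i).ne' (hp i).ne']
    ring
  rw [heq]
  linarith

lemma ratio_mul (a s n : ℝ) (ha : s = 0 → a = 0) : (a / s) * (s / n) = a / n := by
  by_cases hs : s = 0
  · simp [hs, ha hs]
  · by_cases hn : n = 0
    · simp [hn]
    · field_simp

lemma div_div_ratio (a s n : ℝ) (hn : n ≠ 0) : (a / n) / (s / n) = a / s := by
  by_cases hs : s = 0
  · simp [hs]
  · field_simp

/-- merging two asymptotically distinct multinomial count columns incurs
a linear-in-`n` log-likelihood deficit which dominates the `((r−1)/2) log n`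
parameter-count gain, so the combined score difference tends to `−∞`. -/
theorem merging_distinct_tends_to_bot (r : ℕ) (hr : 2 ≤ r)
    (nc1 nc2 : ℕ → Fin r → ℕ)
    (c1 c2 : ℝ) (hc1 : 0 < c1) (hc2 : 0 < c2)
    (p q : Fin r → ℝ) (hp : ∀ i, 0 < p i) (hq : ∀ i, 0 < q i)
    (hps : ∑ i, p i = 1) (hqs : ∑ i, q i = 1) (hpq : p ≠ q)
    (h1 : Tendsto (fun n : ℕ => (∑ i, (nc1 n i : ℝ)) / (n : ℝ)) atTop (nhds c1))
    (h2 : Tendsto (fun n : ℕ => (∑ i, (nc2 n i : ℝ)) / (n : ℝ)) atTop (nhds c2))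
    (h3 : ∀ i, Tendsto (fun n : ℕ => (nc1 n i : ℝ) / ∑ i', (nc1 n i' : ℝ))
      atTop (nhds (p i)))
    (h4 : ∀ i, Tendsto (fun n : ℕ => (nc2 n i : ℝ) / ∑ i', (nc2 n i' : ℝ))
      atTop (nhds (q i))) :
    Tendsto (fun n : ℕ =>
        mergeDelta r (fun i => (nc1 n i : ℝ)) (fun i => (nc2 n i : ℝ))
          + ((r : ℝ) - 1) / 2 * Real.log (n : ℝ))
      atTop atBot := by
  have hc12 : (0:ℝ) < c1 + c2 := by linarith
  -- zero-sum implies zero entries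
  have hAz : ∀ n (i : Fin r), (∑ i', (nc1 n i' : ℝ)) = 0 → (nc1 n i : ℝ) = 0 := by
    intro n i h
    exact (Finset.sum_eq_zero_iff_of_nonneg (fun j _ => Nat.cast_nonneg _)).1 h i
      (Finset.mem_univ i)
  have hBz : ∀ n (i : Fin r), (∑ i', (nc2 n i' : ℝ)) = 0 → (nc2 n i : ℝ) = 0 := by
    intro n i h
    exact (Finset.sum_eq_zero_iff_of_nonneg (fun j _ => Nat.cast_nonneg _)).1 h i
      (Finset.mem_univ i)
  -- componentwise limits
  have hA : ∀ i, Tendsto (fun n : ℕ => (nc1 n i : ℝ) / n) atTop (nhds (p i * c1)) := by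
    intro i
    exact ((h3 i).mul h1).congr fun n => ratio_mul _ _ _ (hAz n i)
  have hB : ∀ i, Tendsto (fun n : ℕ => (nc2 n i : ℝ) / n) atTop (nhds (q i * c2)) := by
    intro i
    exact ((h4 i).mul h2).congr fun n => ratio_mul _ _ _ (hBz n i)
  have hAB : ∀ i, Tendsto (fun n : ℕ => ((nc1 n i : ℝ) + (nc2 n i : ℝ)) / n) atTop
      (nhds (p i * c1 + q i * c2)) := by
    intro i
    simpa [add_div] using (hA i).add (hB i)
  have hS : Tendsto (fun n : ℕ => ((∑ i', (nc1 n i' : ℝ)) + ∑ i', (nc2 n i' : ℝ)) / n)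
      atTop (nhds (c1 + c2)) := by
    simpa [add_div] using h1.add h2
  have hmpos : ∀ i, 0 < (p i * c1 + q i * c2) / (c1 + c2) := by
    intro i
    have : 0 < p i * c1 + q i * c2 := add_pos (mul_pos (hp i) hc1) (mul_pos (hq i) hc2)
    exact div_pos this hc12
  have hratio : ∀ i, Tendsto (fun n : ℕ =>
      ((nc1 n i : ℝ) + (nc2 n i : ℝ)) / ((∑ i', (nc1 n i' : ℝ)) + ∑ i', (nc2 n i' : ℝ)))
      atTop (nhds ((p i * c1 + q i * c2) / (c1 + c2))) := by
    intro i
    refine ((hAB i).div hS hc12.ne').congr' ?_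
    filter_upwards [eventually_ge_atTop 1] with n hn
    exact div_div_ratio _ _ _ (Nat.cast_ne_zero.2 (by omega))
  -- three sums
  have T1 : Tendsto (fun n : ℕ => ∑ i, (((nc1 n i : ℝ) + (nc2 n i : ℝ)) / n) *
      Real.log (((nc1 n i : ℝ) + (nc2 n i : ℝ)) /
        ((∑ i', (nc1 n i' : ℝ)) + ∑ i', (nc2 n i' : ℝ)))) atTop
      (nhds (∑ i, (p i * c1 + q i * c2) *
        Real.log ((p i * c1 + q i * c2) / (c1 + c2)))) := by
    refine tendsto_finset_sum _ fun i _ => (hAB i).mul ?_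
    exact (Real.continuousAt_log (hmpos i).ne').tendsto.comp (hratio i)
  have T2 : Tendsto (fun n : ℕ => ∑ i, ((nc1 n i : ℝ) / n) *
      Real.log ((nc1 n i : ℝ) / ∑ i', (nc1 n i' : ℝ))) atTop
      (nhds (∑ i, (p i * c1) * Real.log (p i))) := by
    refine tendsto_finset_sum _ fun i _ => (hA i).mul ?_
    exact (Real.continuousAt_log (hp i).ne').tendsto.comp (h3 i)
  have T3 : Tendsto (fun n : ℕ => ∑ i, ((nc2 n i : ℝ) / n) *
      Real.log ((nc2 n i : ℝ) / ∑ i', (nc2 n i' : ℝ))) atTop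
      (nhds (∑ i, (q i * c2) * Real.log (q i))) := by
    refine tendsto_finset_sum _ fun i _ => (hB i).mul ?_
    exact (Real.continuousAt_log (hq i).ne').tendsto.comp (h4 i)
  set L : ℝ :=
      (∑ i, (p i * c1 + q i * c2) * Real.log ((p i * c1 + q i * c2) / (c1 + c2)))
        - (∑ i, (p i * c1) * Real.log (p i)) - (∑ i, (q i * c2) * Real.log (q i))
    with hLdef
  -- L < 0 via Gibbs
  have hMsum : ∑ i, (p i * c1 + q i * c2) / (c1 + c2) = 1 := by
    rw [← Finset.sum_div, Finset.sum_add_distrib, ← Finset.sum_mul, ← Finset.sum_mul,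
      hps, hqs]
    field_simp
  obtain ⟨j, hj⟩ := Function.ne_iff.1 hpq
  have hjp : p j ≠ (p j * c1 + q j * c2) / (c1 + c2) := by
    intro h
    apply hj
    rw [eq_div_iff hc12.ne'] at h
    have : p j * c2 = q j * c2 := by ring_nf at h ⊢; linarith
    exact mul_right_cancel₀ hc2.ne' this
  have hjq : q j ≠ (p j * c1 + q j * c2) / (c1 + c2) := by
    intro h
    apply hj
    rw [eq_div_iff hc12.ne'] at h
    have : p j * c1 = q j * c1 := by ring_nf at h ⊢; linarith
    exact mul_right_cancel₀ hc1.ne' this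
  have KLp : 0 < ∑ i, p i * Real.log (p i / ((p i * c1 + q i * c2) / (c1 + c2))) := by
    have := gibbs p (fun i => (p i * c1 + q i * c2) / (c1 + c2)) hp hmpos
      (by rw [hMsum, hps]) j hjp
    simpa using this
  have KLq : 0 < ∑ i, q i * Real.log (q i / ((p i * c1 + q i * c2) / (c1 + c2))) := by
    have := gibbs q (fun i => (p i * c1 + q i * c2) / (c1 + c2)) hq hmpos
      (by rw [hMsum, hqs]) j hjq
    simpa using this
  have hLeq : L = -(c1 * ∑ i, p i * Real.log (p i / ((p i * c1 + q i * c2) / (c1 + c2)))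
      + c2 * ∑ i, q i * Real.log (q i / ((p i * c1 + q i * c2) / (c1 + c2)))) := by
    have key : ∀ i : Fin r,
        (p i * c1 + q i * c2) * Real.log ((p i * c1 + q i * c2) / (c1 + c2))
          - (p i * c1) * Real.log (p i) - (q i * c2) * Real.log (q i)
        = -(c1 * (p i * Real.log (p i / ((p i * c1 + q i * c2) / (c1 + c2))))
            + c2 * (q i * Real.log (q i / ((p i * c1 + q i * c2) / (c1 + c2))))) := by
      intro i
      rw [Real.log_div (hp i).ne' (hmpos i).ne', Real.log_div (hq i).ne' (hmpos i).ne']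
      ring
    calc L = ∑ i, ((p i * c1 + q i * c2) * Real.log ((p i * c1 + q i * c2) / (c1 + c2))
          - (p i * c1) * Real.log (p i) - (q i * c2) * Real.log (q i)) := by
          rw [hLdef]; simp [Finset.sum_sub_distrib]
      _ = ∑ i, -(c1 * (p i * Real.log (p i / ((p i * c1 + q i * c2) / (c1 + c2))))
            + c2 * (q i * Real.log (q i / ((p i * c1 + q i * c2) / (c1 + c2))))) :=
          Finset.sum_congr rfl fun i _ => key i
      _ = -(c1 * ∑ i, p i * Real.log (p i / ((p i * c1 + q i * c2) / (c1 + c2)))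
            + c2 * ∑ i, q i * Real.log (q i / ((p i * c1 + q i * c2) / (c1 + c2)))) := by
          rw [Finset.sum_neg_distrib, Finset.sum_add_distrib, ← Finset.mul_sum,
            ← Finset.mul_sum]
  have hLneg : L < 0 := by
    rw [hLeq]
    nlinarith [mul_pos hc1 KLp, mul_pos hc2 KLq]
  -- log n / n → 0
  have hlog : Tendsto (fun n : ℕ => Real.log n / n) atTop (nhds 0) :=
    Real.isLittleO_log_id_atTop.tendsto_div_nhds_zero.comp tendsto_natCast_atTop_atTop
  -- the averaged quantity converges to L
  have hφ : Tendsto (fun n : ℕ =>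
      mergeDelta r (fun i => (nc1 n i : ℝ)) (fun i => (nc2 n i : ℝ)) / n
        + ((r : ℝ) - 1) / 2 * (Real.log n / n)) atTop
      (nhds (L + ((r : ℝ) - 1) / 2 * 0)) := by
    refine Tendsto.add ?_ (tendsto_const_nhds.mul hlog)
    refine ((T1.sub T2).sub T3).congr fun n => ?_
    simp only [mergeDelta, sub_div, Finset.sum_div, mul_div_right_comm]
  have hL0 : L + ((r : ℝ) - 1) / 2 * 0 < 0 := by simpa using hLneg
  have final := tendsto_natCast_atTop_atTop.atTop_mul_neg hL0 hφ
  refine final.congr' ?_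
  filter_upwards [eventually_ge_atTop 1] with n hn
  have hn0 : (n : ℝ) ≠ 0 := Nat.cast_ne_zero.2 (by omega)
  field_simp
end
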